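/- The vector space U_\alpha with basis {a_k, \bar a_k | k \in Z} is a module over the three-point Witt algebra W (with basis d_n, d^1_n and brackets [d_m,d_n]=(n-m)(d_{m+n+1}+4d_{m+n}), [d^1_m,d^1_n]=(n-m)d_{m+n-1}, [d_m,d^1_n]=(n-m-1)d^1_{m+n+1}+(4n-4m-2)d^1_{m+n}) under the action: d_n a_i = (\alpha+i)(a_{i+n+1} + 4 a_{i+n}); d_n \bar a_i = (\alpha+i+1)\bar a_{n+i+1} + (4\alpha+4i+2)\bar a_{n+i}; d^1_n a_i = (\alpha+i)\bar a_{n+i-1}; d^1_n \bar a_i = (\alpha+i+1) a_{n+i+1} + 2(2\alpha+2i+1) a_{n+i}. -/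

import Mathlib

/-- The vector space `U_α` with basis `{a_k, ā_k | k ∈ ℤ}`; the basis is indexed by
`Bool × ℤ` with `(false, k) ↔ a_k` and `(true, k) ↔ ā_k`. -/
abbrev UMod : Type := (Bool × ℤ) →₀ ℂ

/-- The basis vector `a_i`. -/
noncomputable def aU (i : ℤ) : UMod := Finsupp.single (false, i) 1

/-- The basis vector `ā_i`. -/
noncomputable def abarU (i : ℤ) : UMod := Finsupp.single (true, i) 1

/-- The operator by which `d_n` acts on `U_α`. -/
noncomputable def dOp (α : ℂ) (n : ℤ) : Module.End ℂ UMod :=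
  Finsupp.lift UMod ℂ (Bool × ℤ) fun p =>
    match p with
    | (false, i) => (α + (i : ℂ)) • (aU (i + n + 1) + (4 : ℂ) • aU (i + n))
    | (true, i) => (α + (i : ℂ) + 1) • abarU (n + i + 1) +
        (4 * α + 4 * (i : ℂ) + 2) • abarU (n + i)

/-- The operator by which `d¹_n` acts on `U_α`. -/
noncomputable def d1Op (α : ℂ) (n : ℤ) : Module.End ℂ UMod :=
  Finsupp.lift UMod ℂ (Bool × ℤ) fun p =>
    match p with
    | (false, i) => (α + (i : ℂ)) • abarU (n + i - 1)
    | (true, i) => (α + (i : ℂ) + 1) • aU (n + i + 1) +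
        (2 * (2 * α + 2 * (i : ℂ) + 1)) • aU (n + i)

theorem UMod.endo_ext {f g : Module.End ℂ UMod} (ha : ∀ i, f (aU i) = g (aU i))
    (hb : ∀ i, f (abarU i) = g (abarU i)) : f = g :=
  Finsupp.basisSingleOne.ext fun
    | (false, i) => ha i
    | (true, i) => hb i

section
variable (α : ℂ) (n i : ℤ)

@[simp]
theorem dOp_aU : dOp α n (aU i) = (α + (i : ℂ)) • (aU (i + n + 1) + (4 : ℂ) • aU (i + n)) := by
  simp [dOp, aU]

@[simp]
theorem dOp_abarU :
    dOp α n (abarU i) = (α + (i : ℂ) + 1) • abarU (n + i + 1) +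
      (4 * α + 4 * (i : ℂ) + 2) • abarU (n + i) := by
  simp [dOp, abarU]

@[simp]
theorem d1Op_aU : d1Op α n (aU i) = (α + (i : ℂ)) • abarU (n + i - 1) := by
  simp [d1Op, aU]

@[simp]
theorem d1Op_abarU :
    d1Op α n (abarU i) = (α + (i : ℂ) + 1) • aU (n + i + 1) +
      (2 * (2 * α + 2 * (i : ℂ) + 1)) • aU (n + i) := by
  simp [d1Op, abarU]

end

section
variable (α : ℂ) (m n : ℤ)

theorem dOp_lie_dOp :
    ⁅dOp α m, dOp α n⁆ = ((n : ℂ) - m) • (dOp α (m + n + 1) + (4 : ℂ) • dOp α (m + n)) := by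
  refine UMod.endo_ext (fun i => ?_) fun i => ?_ <;>
  · simp only [LieRing.of_associative_ring_bracket, LinearMap.sub_apply,
      Module.End.mul_apply, LinearMap.smul_apply, LinearMap.add_apply, dOp_aU,
      dOp_abarU, map_add, map_smul]
    -- `ring_nf` first normalises the integer indices, so that e.g. `aU (i + n + 1 + m)` and
    -- `aU (i + (m + n + 1))` become syntactically equal before `module` compares coefficients.
    ring_nf
    module

theorem d1Op_lie_d1Op : ⁅d1Op α m, d1Op α n⁆ = ((n : ℂ) - m) • dOp α (m + n - 1) := by
  refine UMod.endo_ext (fun i => ?_) fun i => ?_ <;>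
  · simp only [LieRing.of_associative_ring_bracket, LinearMap.sub_apply,
      Module.End.mul_apply, LinearMap.smul_apply, dOp_aU, dOp_abarU, d1Op_aU,
      d1Op_abarU, map_add, map_smul]
    ring_nf
    module

theorem dOp_lie_d1Op :
    ⁅dOp α m, d1Op α n⁆ = ((n : ℂ) - m - 1) • d1Op α (m + n + 1) +
      (4 * (n : ℂ) - 4 * m - 2) • d1Op α (m + n) := by
  refine UMod.endo_ext (fun i => ?_) fun i => ?_ <;>
  · simp only [LieRing.of_associative_ring_bracket, LinearMap.sub_apply,
      Module.End.mul_apply, LinearMap.smul_apply, LinearMap.add_apply, dOp_aU,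
      dOp_abarU, d1Op_aU, d1Op_abarU, map_add, map_smul]
    ring_nf
    module

end

/-- `U_α` is a module over the three-point Witt algebra, i.e. the
operators `dOp`, `d1Op` satisfy the three-point Witt commutation relations. -/
theorem U_alpha_is_witt_module (α : ℂ) (m n : ℤ) :
    ⁅dOp α m, dOp α n⁆ = ((n : ℂ) - m) • (dOp α (m + n + 1) + (4 : ℂ) • dOp α (m + n)) ∧
    ⁅d1Op α m, d1Op α n⁆ = ((n : ℂ) - m) • dOp α (m + n - 1) ∧
    ⁅dOp α m, d1Op α n⁆ = ((n : ℂ) - m - 1) • d1Op α (m + n + 1) +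
      (4 * (n : ℂ) - 4 * m - 2) • d1Op α (m + n) :=
  ⟨dOp_lie_dOp α m n, d1Op_lie_d1Op α m n, dOp_lie_d1Op α m n⟩
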